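/- Let Ω₁ be a nonempty bounded open convex subset of ℝ^d with boundary Γ = frontier(Ω₁), and let φ be the signed distance function of Γ. Then φ is a convex function on ℝ^d: for all x₁, x₂ ∈ ℝ^d and all θ ∈ [0,1], φ(θx₁ + (1−θ)x₂) ≤ θφ(x₁) + (1−θ)φ(x₂). -/

import Mathlib

/-!
The signed distance function is the pointwise maximum of the affine functions `x ↦ ⟪x - b, u⟫`,
where `u` is a unit outer normal of a half-space supporting `Ω` at a boundary point `b`.
Each of them is a minorant: inside `Ω` the ball of radius `-sdf x` around `x` lies in the
half-space, and outside `⟪x - b, u⟫ ≤ ‖x - p‖` for every boundary point `p`. At every point one of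
them is attained: by Hahn–Banach at a nearest boundary point for points of the closure, and by the
metric projection onto the closure for the other points.
-/

open Classical in
noncomputable def sdf {d : ℕ} (Ω : Set (EuclideanSpace ℝ (Fin d)))
    (x : EuclideanSpace ℝ (Fin d)) : ℝ :=
  if x ∈ Ω then -(Metric.infDist x (frontier Ω)) else Metric.infDist x (frontier Ω)

open Set Metric RealInnerProductSpace

theorem IsPreconnected.inter_frontier_nonempty {X : Type*} [TopologicalSpace X] {s t : Set X}
    (ht : IsPreconnected t) (hts : (t ∩ s).Nonempty) (hts' : (t \ s).Nonempty) :
    (t ∩ frontier s).Nonempty := by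
  by_contra h
  have hcover : t ⊆ interior s ∪ (closure s)ᶜ := fun z hz => by
    by_cases hzs : z ∈ closure s
    · exact .inl (by_contra fun hzi => h ⟨z, hz, hzs, hzi⟩)
    · exact .inr hzs
  obtain ⟨a, hat, has⟩ := hts
  have hai : a ∈ interior s := (mem_interior_iff_notMem_frontier has).2 fun haf => h ⟨a, hat, haf⟩
  obtain ⟨b, hbt, hbs⟩ := hts'
  have hdisj : Disjoint (interior s) (closure s)ᶜ :=
    disjoint_compl_right_iff_subset.2 (interior_subset.trans subset_closure)
  exact hbs <| interior_subset <| ht.subset_left_of_subset_union isOpen_interior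
    isClosed_closure.isOpen_compl hdisj hcover ⟨a, hat, hai⟩ hbt

section NormedSpace

variable {E : Type*} [NormedAddCommGroup E] [NormedSpace ℝ E] {s : Set E} {x y : E}

theorem exists_mem_frontier_dist_le (hx : x ∈ s) (hy : y ∉ s) :
    ∃ p ∈ frontier s, dist x p ≤ dist x y := by
  obtain ⟨p, hp, hpf⟩ := (convex_segment x y).isPreconnected.inter_frontier_nonempty
    ⟨x, left_mem_segment ℝ x y, hx⟩ ⟨y, right_mem_segment ℝ x y, hy⟩
  exact ⟨p, hpf, (dist_add_dist_of_mem_segment hp).symm ▸ le_add_of_nonneg_right dist_nonneg⟩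

theorem Metric.ball_infDist_frontier_subset (hx : x ∈ s) : ball x (infDist x (frontier s)) ⊆ s :=
  fun y hy => by_contra fun hys => by
    obtain ⟨p, hpf, hp⟩ := exists_mem_frontier_dist_le hx hys
    exact (infDist_le_dist_of_mem hpf).not_gt (hp.trans_lt (mem_ball'.1 hy))

theorem Metric.infDist_frontier_le_infDist (hs : s.Nonempty) (hy : y ∉ s) :
    infDist y (frontier s) ≤ infDist y s :=
  (le_infDist hs).2 fun x hx => by
    obtain ⟨p, hpf, hp⟩ := exists_mem_frontier_dist_le (s := sᶜ) hy (not_not_intro hx)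
    exact (infDist_le_dist_of_mem (frontier_compl s ▸ hpf)).trans hp

end NormedSpace

section InnerProductSpace

variable {E : Type*} [NormedAddCommGroup E] [InnerProductSpace ℝ E] {s : Set E} {b z : E}

theorem exists_unit_supporting_of_notMem [CompleteSpace E] (hconv : Convex ℝ s) (hopen : IsOpen s)
    (hne : s.Nonempty) (hb : b ∉ s) :
    ∃ u : E, ‖u‖ = 1 ∧ s ⊆ {w | ⟪w - b, u⟫ ≤ 0} := by
  obtain ⟨f, hf⟩ := geometric_hahn_banach_open_point hconv hopen hb
  set v := (InnerProductSpace.toDual ℝ E).symm f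
  have hv : ∀ w ∈ s, ⟪w - b, v⟫ < 0 := fun w hw => by
    rw [real_inner_comm, inner_sub_right, InnerProductSpace.toDual_symm_apply,
      InnerProductSpace.toDual_symm_apply]
    linarith [hf w hw]
  have hv0 : v ≠ 0 := fun h0 => by
    obtain ⟨a, ha⟩ := hne
    simpa [h0] using hv a ha
  refine ⟨‖v‖⁻¹ • v, norm_smul_inv_norm hv0, fun w hw => ?_⟩
  rw [mem_ofPred_eq, real_inner_smul_right]
  exact mul_nonpos_of_nonneg_of_nonpos (by positivity) (hv w hw).le

theorem exists_unit_supporting_infDist_eq [ProperSpace E] (hconv : Convex ℝ s)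
    (hclosed : IsClosed s) (hne : s.Nonempty) (hz : z ∉ s) :
    ∃ b u : E, ‖u‖ = 1 ∧ s ⊆ {w | ⟪w - b, u⟫ ≤ 0} ∧ ⟪z - b, u⟫ = infDist z s := by
  obtain ⟨b, hbs, hbd⟩ := hclosed.exists_infDist_eq_dist hne z
  have hzb : z - b ≠ 0 := sub_ne_zero.2 fun h => hz (h ▸ hbs)
  have hproj : ∀ w ∈ s, ⟪z - b, w - b⟫ ≤ 0 := by
    refine (norm_eq_iInf_iff_real_inner_le_zero hconv hbs).1 ?_
    simp_rw [← dist_eq_norm]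
    rw [← hbd, infDist_eq_iInf]
  refine ⟨b, ‖z - b‖⁻¹ • (z - b), norm_smul_inv_norm hzb, fun w hw => ?_, ?_⟩
  · rw [mem_ofPred_eq, real_inner_smul_right, real_inner_comm]
    exact mul_nonpos_of_nonneg_of_nonpos (by positivity) (hproj w hw)
  · rw [real_inner_smul_right, real_inner_self_eq_norm_sq, hbd, dist_eq_norm]
    field_simp

end InnerProductSpace

section SignedDistance

variable {d : ℕ} {Ω : Set (EuclideanSpace ℝ (Fin d))} {x : EuclideanSpace ℝ (Fin d)}

theorem sdf_of_notMem (hx : x ∉ Ω) : sdf Ω x = infDist x (frontier Ω) := if_neg hx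

theorem sdf_of_mem_closure (hx : x ∈ closure Ω) : sdf Ω x = -infDist x (frontier Ω) := by
  by_cases hxΩ : x ∈ Ω
  · exact if_pos hxΩ
  · have hxf : x ∈ frontier Ω := ⟨hx, fun hi => hxΩ (interior_subset hi)⟩
    simp [sdf, hxΩ, infDist_zero_of_mem hxf]

theorem sdf_of_frontier_eq_empty (hΓ : frontier Ω = ∅) : sdf Ω x = 0 := by
  simp [sdf, hΓ]

theorem inner_sub_le_sdf (hΓ : (frontier Ω).Nonempty) {b u : EuclideanSpace ℝ (Fin d)}
    (hu : ‖u‖ = 1) (hsupp : Ω ⊆ {w | ⟪w - b, u⟫ ≤ 0}) (x : EuclideanSpace ℝ (Fin d)) :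
    ⟪x - b, u⟫ ≤ sdf Ω x := by
  have hsupp' : closure Ω ⊆ {w | ⟪w - b, u⟫ ≤ 0} :=
    closure_minimal hsupp (isClosed_le (by fun_prop) continuous_const)
  by_cases hx : x ∈ Ω
  · set R := infDist x (frontier Ω)
    have hball : x + R • u ∈ closure Ω := by
      rcases eq_or_ne R 0 with hR | hR
      · simpa [hR] using subset_closure hx
      · refine closure_mono (ball_infDist_frontier_subset hx) ?_
        rw [closure_ball x hR, mem_closedBall, dist_eq_norm, add_sub_cancel_left, norm_smul, hu,
          mul_one, Real.norm_of_nonneg infDist_nonneg]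
    have := hsupp' hball
    rw [mem_ofPred_eq, add_sub_right_comm, inner_add_left, real_inner_smul_left,
      real_inner_self_eq_norm_sq, hu] at this
    rw [sdf_of_mem_closure (subset_closure hx)]
    linarith
  · rw [sdf_of_notMem hx]
    refine (le_infDist hΓ).2 fun p hp => ?_
    have hpb : ⟪p - b, u⟫ ≤ 0 := hsupp' (frontier_subset_closure hp)
    have hxp : ⟪x - p, u⟫ ≤ ‖x - p‖ := by simpa [hu] using real_inner_le_norm (x - p) u
    have hsplit : ⟪x - b, u⟫ = ⟪x - p, u⟫ + ⟪p - b, u⟫ := by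
      rw [← inner_add_left, sub_add_sub_cancel]
    rw [dist_eq_norm]
    linarith

theorem exists_supporting_sdf_le (hopen : IsOpen Ω) (hconv : Convex ℝ Ω)
    (hΓ : (frontier Ω).Nonempty) (z : EuclideanSpace ℝ (Fin d)) :
    ∃ b u : EuclideanSpace ℝ (Fin d), ‖u‖ = 1 ∧ Ω ⊆ {w | ⟪w - b, u⟫ ≤ 0} ∧
      sdf Ω z ≤ ⟪z - b, u⟫ := by
  have hne : Ω.Nonempty := closure_nonempty_iff.1 (hΓ.mono frontier_subset_closure)
  by_cases hz : z ∈ closure Ω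
  · obtain ⟨b, hbΓ, hbd⟩ := isClosed_frontier.exists_infDist_eq_dist hΓ z
    have hbΩ : b ∉ Ω := by
      rw [hopen.frontier_eq] at hbΓ
      exact hbΓ.2
    obtain ⟨u, hu, hsupp⟩ := exists_unit_supporting_of_notMem hconv hopen hne hbΩ
    refine ⟨b, u, hu, hsupp, ?_⟩
    rw [sdf_of_mem_closure hz, hbd, dist_eq_norm]
    simpa [hu] using neg_le_of_abs_le (abs_real_inner_le_norm (z - b) u)
  · obtain ⟨b, u, hu, hsupp, hzb⟩ :=
      exists_unit_supporting_infDist_eq hconv.closure isClosed_closure hne.closure hz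
    refine ⟨b, u, hu, subset_closure.trans hsupp, ?_⟩
    rw [sdf_of_notMem fun h => hz (subset_closure h), hzb, infDist_closure]
    exact infDist_frontier_le_infDist hne fun h => hz (subset_closure h)

end SignedDistance

theorem stmt_1_general {d : ℕ} (Ω₁ : Set (EuclideanSpace ℝ (Fin d)))
    (hopen : IsOpen Ω₁)
    (hconv : Convex ℝ Ω₁) :
    ∀ x₁ x₂ : EuclideanSpace ℝ (Fin d), ∀ θ : ℝ, 0 ≤ θ → θ ≤ 1 →
      sdf Ω₁ (θ • x₁ + (1 - θ) • x₂) ≤ θ * sdf Ω₁ x₁ + (1 - θ) * sdf Ω₁ x₂ := by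
  intro x₁ x₂ θ hθ0 hθ1
  rcases (frontier Ω₁).eq_empty_or_nonempty with hΓ | hΓ
  · simp [sdf_of_frontier_eq_empty hΓ]
  obtain ⟨b, u, hu, hsupp, hz⟩ := exists_supporting_sdf_le hopen hconv hΓ (θ • x₁ + (1 - θ) • x₂)
  have hcomb : θ • x₁ + (1 - θ) • x₂ - b = θ • (x₁ - b) + (1 - θ) • (x₂ - b) := by module
  calc sdf Ω₁ (θ • x₁ + (1 - θ) • x₂) ≤ ⟪θ • x₁ + (1 - θ) • x₂ - b, u⟫ := hz
    _ = θ * ⟪x₁ - b, u⟫ + (1 - θ) * ⟪x₂ - b, u⟫ := by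
      rw [hcomb, inner_add_left, real_inner_smul_left, real_inner_smul_left]
    _ ≤ θ * sdf Ω₁ x₁ + (1 - θ) * sdf Ω₁ x₂ := by
      have hmin := inner_sub_le_sdf hΓ hu hsupp
      exact add_le_add (mul_le_mul_of_nonneg_left (hmin x₁) hθ0)
        (mul_le_mul_of_nonneg_left (hmin x₂) (sub_nonneg.2 hθ1))

/-- the signed distance function of a nonempty bounded open convex set
is a convex function. -/
theorem stmt_1 {d : ℕ} (Ω₁ : Set (EuclideanSpace ℝ (Fin d)))
    (hne : Ω₁.Nonempty) (hbdd : Bornology.IsBounded Ω₁) (hopen : IsOpen Ω₁)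
    (hconv : Convex ℝ Ω₁) :
    ∀ x₁ x₂ : EuclideanSpace ℝ (Fin d), ∀ θ : ℝ, 0 ≤ θ → θ ≤ 1 →
      sdf Ω₁ (θ • x₁ + (1 - θ) • x₂) ≤ θ * sdf Ω₁ x₁ + (1 - θ) * sdf Ω₁ x₂ :=
  stmt_1_general Ω₁ hopen hconv
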